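/- Let G, F be formal power series over ℚ with G(0) = 1, F(0) = 0 and with the coefficient of x^1 in F nonzero, and define the Riordan triangle entries R(n,m) := [x^n]( G(x)·F(x)^m ). Work in the ring (ℚ[[t]])[[y]] and let X = x(t;y) be the element with zero constant term satisfying X − t·F(X) = y (the compositional inverse of y(t;x) = x − t·F(x)). Let H be the formal power series over ℚ with H(0) = 0 whose formal derivative is G. Then for all integers d ≥ 0 and p ≥ 0, the coefficient of t^p·y^{d+1} in H(x(t;y)) equals binom(d+p, p)·R(d+p, p)/(d+1). Equivalently, the logarithmic generating function Σ_{d≥0} G D̂(d,t)·y^{d+1}/(d+1), where G D̂(d,t) := Σ_{p≥0} binom(d+p,p)·R(d+p,p)·t^p is the ordinary generating function of the products of the d-th diagonal entries of Pascal's triangle with those of the Riordan triangle, equals H(x(t;y)) − H(0). -/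

import Mathlib

open PowerSeries

/-- Formal composition (substitution) `f(a)` of formal power series: substituting `a`
(which is intended to have zero constant term) into `f`. -/
noncomputable def PowerSeries.substitute {R : Type*} [CommRing R] (a f : R⟦X⟧) : R⟦X⟧ :=
  PowerSeries.mk fun n => ∑ k ∈ Finset.range (n + 1),
    PowerSeries.coeff (R := R) k f * PowerSeries.coeff (R := R) n (a ^ k)

/-!
Write `t` for the inner and `y` for the outer variable of `ℚ⟦t⟧⟦y⟧`, and `F = x F₁`. Then
`x(t;y)` is the compositional inverse of `W(x) = x (1 - t F₁(x))`, so Lagrange inversion gives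
`(d+1) [y^(d+1)] H(x(t;y)) = [x^d] G(x) (1 - t F₁(x))^(-(d+1))`, and expanding
`(1 - t F₁)^(-(d+1)) = ∑ₚ binom(d+p, p) tᵖ F₁ᵖ` turns `[tᵖ]` of the right side into
`binom(d+p, p) [x^(d+p)] G Fᵖ`. Lagrange inversion itself follows by writing
`H = ∑_{k ≤ n} sₖ Wᵏ + O(W^(n+1))` and noting that `[x^(n-1)] (Wᵏ)' (x/W)ⁿ = n δₖₙ`.
-/

namespace PowerSeries

section Substitution

variable {R : Type*} [CommRing R]

lemma coeff_pow_eq_zero_of_lt {a : R⟦X⟧} (ha : constantCoeff a = 0) {n k : ℕ} (h : n < k) :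
    coeff n (a ^ k) = 0 := by
  obtain ⟨b, rfl⟩ := X_dvd_iff.mpr ha
  rw [mul_pow, coeff_X_pow_mul', if_neg (by omega)]

lemma substitute_eq_subst {a : R⟦X⟧} (ha : constantCoeff a = 0) (f : R⟦X⟧) :
    substitute a f = f.subst a := by
  ext n
  rw [substitute, coeff_mk, coeff_subst' (HasSubst.of_constantCoeff_zero' ha),
    finsum_eq_sum_of_support_subset _ fun k hk => ?_]
  · rfl
  · by_contra hkn
    simp only [Finset.coe_range, Set.mem_Iio, not_lt] at hkn
    exact hk (by simp only [coeff_pow_eq_zero_of_lt ha (by omega : n < k), smul_zero])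

lemma derivative_map {S : Type*} [CommRing S] (φ : R →+* S) (f : R⟦X⟧) :
    d⁄dX S (map φ f) = map φ (d⁄dX R f) := by
  ext n
  simp [coeff_derivative]

lemma subst_eq_X_of_subst_eq_X {P Y : R⟦X⟧} (hP : constantCoeff P = 0) (hP' : IsUnit (coeff 1 P))
    (hY : HasSubst Y) (hPY : P.subst Y = X) : Y.subst P = X := by
  have hY_eq : Y = P.substInvOfIsUnit hP' :=
    calc Y = subst Y (subst P (P.substInvOfIsUnit hP')) := by
          rw [subst_substInvOfIsUnit_left P hP hP', subst_X hY]
      _ = P.substInvOfIsUnit hP' := by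
        rw [subst_comp_subst_apply (HasSubst.of_constantCoeff_zero' hP) hY, hPY, X_subst]
  rw [hY_eq, subst_substInvOfIsUnit_left P hP hP']

end Substitution

section Lagrange

variable {A : Type*} [CommRing A] {U V : A⟦X⟧}

lemma coeff_derivative_X_mul_pow_mul_mul_pow_eq_zero (hUV : U * V = 1) (g : A⟦X⟧) (n : ℕ) :
    coeff n (d⁄dX A ((X * U) ^ (n + 2) * g) * V ^ (n + 1)) = 0 := by
  have hUVn : U ^ (n + 1) * V ^ (n + 1) = 1 := by rw [← mul_pow, hUV, one_pow]
  have hfactor : d⁄dX A ((X * U) ^ (n + 2) * g) * V ^ (n + 1) =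
      X ^ (n + 1) * ((X * U) * d⁄dX A g + ((n : A⟦X⟧) + 2) * d⁄dX A (X * U) * g) := by
    rw [Derivation.leibniz, derivative_pow, smul_eq_mul, smul_eq_mul,
      show n + 2 - 1 = n + 1 by omega]
    push_cast
    linear_combination
      (X ^ (n + 1) * ((X * U) * d⁄dX A g + ((n : A⟦X⟧) + 2) * d⁄dX A (X * U) * g)) * hUVn
  rw [hfactor, coeff_X_pow_mul', if_neg (by omega)]

variable [IsAddTorsionFree A]

lemma coeff_derivative_mul_pow (f : A⟦X⟧) (m : ℕ) :
    coeff m (d⁄dX A f * f ^ m) = coeff (m + 1) (f ^ (m + 1)) := by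
  apply nsmul_right_injective m.succ_ne_zero
  have h := coeff_derivative (f ^ (m + 1)) m
  rw [derivative_pow, Nat.add_sub_cancel, mul_assoc, mul_comm (f ^ m), ← nsmul_eq_mul,
    map_nsmul] at h
  simp only [nsmul_eq_mul, Nat.cast_succ] at h ⊢
  rw [h, mul_comm]

lemma coeff_derivative_X_mul_pow_mul_pow (hUV : U * V = 1) {k n : ℕ} (hk : k ≤ n + 1) :
    coeff n (d⁄dX A ((X * U) ^ k) * V ^ (n + 1)) = if k = n + 1 then (n + 1 : A) else 0 := by
  -- With `W = X * U`, this is `k / (k - n - 1)` times the residue of the derivative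
  -- `(W ^ (k - n - 1))'` of a Laurent series, hence zero for `k ≤ n`.
  obtain _ | j := k
  · simp
  obtain ⟨m, rfl⟩ := Nat.exists_eq_add_of_le (Nat.le_of_succ_le_succ hk)
  have hUVj : U ^ j * V ^ j = 1 := by rw [← mul_pow, hUV, one_pow]
  have hdUV : d⁄dX A U * V + U * d⁄dX A V = 0 := by
    have := congrArg (d⁄dX A) hUV
    rw [Derivation.leibniz, derivative_one, smul_eq_mul, smul_eq_mul] at this
    linear_combination this
  have hsplit : d⁄dX A ((X * U) ^ (j + 1)) * V ^ (j + m + 1) =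
      (j + 1) • (X ^ j * (V ^ m + X * (d⁄dX A U * V ^ (m + 1)))) := by
    rw [derivative_pow, Derivation.leibniz, derivative_X, smul_eq_mul, smul_eq_mul, nsmul_eq_mul]
    push_cast
    linear_combination
      (((j : A⟦X⟧) + 1) * X ^ j * (U * V ^ (m + 1) + X * d⁄dX A U * V ^ (m + 1))) * hUVj
        + ((j + 1) * X ^ j * V ^ m) * hUV
  rw [hsplit, map_nsmul, add_comm j m, coeff_X_pow_mul]
  obtain _ | m := m
  · simp
  · have hU' : d⁄dX A U * V ^ (m + 2) = -(d⁄dX A V * V ^ m) := by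
      linear_combination V ^ (m + 1) * hdUV - d⁄dX A V * V ^ m * hUV
    rw [map_add, coeff_succ_X_mul, hU', map_neg, coeff_derivative_mul_pow]
    simp

/-- Lagrange inversion `n [Xⁿ] f(Y) = [Xⁿ⁻¹] f' (X / W)ⁿ` for the inverse `Y` of `W = X * U`. -/
theorem lagrange_inversion (hUV : U * V = 1) {Y : A⟦X⟧} (hY : HasSubst Y)
    (hWY : (X * U).subst Y = X) (f : A⟦X⟧) (n : ℕ) :
    (n + 1) • coeff (n + 1) (f.subst Y) = coeff n (d⁄dX A f * V ^ (n + 1)) := by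
  set W := X * U
  set S : A⟦X⟧ := f.subst Y
  have hW0 : constantCoeff W = 0 := by simp [W]
  have hW : HasSubst W := HasSubst.of_constantCoeff_zero' hW0
  have hW1 : IsUnit (coeff 1 W) := by
    rw [coeff_succ_X_mul, coeff_zero_eq_constantCoeff]
    exact IsUnit.of_mul_eq_one _ (by rw [← map_mul, hUV, map_one])
  have hfS : f = S.subst W := by
    rw [subst_comp_subst_apply hY hW, subst_eq_X_of_subst_eq_X hW0 hW1 hY hWY, X_subst]
  obtain ⟨T, hT⟩ : X ^ (n + 2) ∣ S - ∑ k ∈ Finset.range (n + 2), coeff k S • X ^ k := by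
    rw [X_pow_dvd_iff]
    intro m hm
    simp [coeff_X_pow, hm]
  have hfW : f = ∑ k ∈ Finset.range (n + 2), coeff k S • W ^ k + W ^ (n + 2) * T.subst W := by
    rw [hfS, ← coe_substAlgHom hW, congrArg (substAlgHom hW) (eq_add_of_sub_eq' hT)]
    simp [W, substAlgHom_X hW]
  rw [hfW, map_add, map_sum, add_mul, Finset.sum_mul, map_add, map_sum,
    coeff_derivative_X_mul_pow_mul_mul_pow_eq_zero hUV, add_zero]
  rw [Finset.sum_congr rfl fun k hk => by
    rw [Derivation.map_smul, smul_mul_assoc, map_smul,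
      coeff_derivative_X_mul_pow_mul_pow hUV (Finset.mem_range_succ_iff.mp hk)]]
  simp [nsmul_eq_mul, mul_comm]

end Lagrange

section SubstTMul

variable {R : Type*} [CommRing R]

/-- `c ↦ c(t • g(y))`, writing `R⟦t⟧⟦y⟧` for `(R⟦X⟧)⟦X⟧` with `t` the inner variable. -/
noncomputable def substTMul (g : R⟦X⟧) : R⟦X⟧ →+* R⟦X⟧⟦X⟧ where
  toFun c := mk fun a => mk fun p => coeff p c * coeff a (g ^ p)
  map_one' := by
    ext a p
    rcases a with _ | a <;> rcases p with _ | p <;> simp [coeff_one]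
  map_mul' c c' := by
    ext a p
    simp only [coeff_mk, coeff_mul, map_sum, Finset.sum_mul]
    rw [Finset.sum_comm]
    refine Finset.sum_congr rfl fun q hq => ?_
    rw [← Finset.HasAntidiagonal.mem_antidiagonal.mp hq, pow_add, coeff_mul, Finset.mul_sum]
    exact Finset.sum_congr rfl fun _ _ => by ring
  map_zero' := by ext; simp
  map_add' c c' := by ext; simp [add_mul]

lemma coeff_coeff_map_C_mul_substTMul (G g c : R⟦X⟧) (a p : ℕ) :
    coeff p (coeff a (map (C (R := R)) G * substTMul g c)) = coeff p c * coeff a (G * g ^ p) := by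
  rw [coeff_mul, map_sum, coeff_mul, Finset.mul_sum]
  refine Finset.sum_congr rfl fun _ _ => ?_
  simp only [coeff_map, coeff_C_mul, substTMul, RingHom.coe_mk, MonoidHom.coe_mk, OneHom.coe_mk,
    coeff_mk]
  ring

lemma substTMul_X (g : R⟦X⟧) : substTMul g X = C (R := R⟦X⟧) X * map (C (R := R)) g := by
  ext a p
  rcases p with _ | _ | p <;>
    simp [substTMul, coeff_X, coeff_C_mul, coeff_map, -coeff_zero_eq_constantCoeff]

end SubstTMul

end PowerSeries

theorem riordan_diagonal_lgf_general (G F : ℚ⟦X⟧)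
    (hF0 : constantCoeff (R := ℚ) F = 0)
    (R : ℕ → ℕ → ℚ)
    (hR : ∀ n m : ℕ, R n m = coeff (R := ℚ) n (G * F ^ m))
    (H : ℚ⟦X⟧) (hH : H.derivativeFun = G)
    (Xser : (ℚ⟦X⟧)⟦X⟧)
    (hX0 : constantCoeff (R := ℚ⟦X⟧) Xser = 0)
    (hXeq : Xser - PowerSeries.C (R := ℚ⟦X⟧) PowerSeries.X *
        PowerSeries.substitute Xser (PowerSeries.map (PowerSeries.C (R := ℚ)) F)
      = PowerSeries.X) :
    ∀ d p : ℕ,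
      coeff (R := ℚ) p (coeff (R := ℚ⟦X⟧) (d + 1)
          (PowerSeries.substitute Xser (PowerSeries.map (PowerSeries.C (R := ℚ)) H)))
        = ((d + p).choose p : ℚ) * R (d + p) p / (d + 1) := by
  intro d p
  have : IsAddTorsionFree ℚ⟦X⟧ := .of_module_rat _
  have hXs := HasSubst.of_constantCoeff_zero' hX0
  obtain ⟨F₁, rfl⟩ := X_dvd_iff.mpr hF0
  have hUV : (1 - C X * map C F₁) * substTMul F₁ (mk 1) = 1 := by
    rw [← substTMul_X, ← map_one (substTMul F₁), ← map_sub, ← map_mul, mul_comm,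
      mk_one_mul_one_sub_eq_one, map_one]
  have hWY : (X * (1 - C X * map C F₁)).subst Xser = X := by
    rw [show X * (1 - C X * map C F₁) = X - C X * map C (X * F₁) by rw [map_mul, map_X]; ring,
      subst_sub hXs, subst_X hXs, subst_mul hXs, subst_C, ← substitute_eq_subst hX0]
    exact hXeq
  have key := congrArg (coeff p) (lagrange_inversion hUV hXs hWY (map C H) d)
  rw [derivative_map, ← map_pow, mk_one_pow_eq_mk_choose_add, map_nsmul,
    coeff_coeff_map_C_mul_substTMul, coeff_mk] at key
  rw [show d⁄dX ℚ H = G from hH, nsmul_eq_mul, Nat.cast_succ] at key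
  rw [substitute_eq_subst hX0, hR, eq_div_iff (by positivity), mul_comm, key,
    Nat.choose_symm_add, mul_pow, mul_left_comm, coeff_X_pow_mul]

/-- **L.g.f. for diagonals of a Riordan triangle multiplied by Pascal diagonals.**
Let `R = (G, F)` be a Riordan triangle, with entries `R(n,m) = [x^n](G·F^m)`.
Let `X = x(t;y)` be the series in `(ℚ[[t]])[[y]]` with zero constant term satisfying
`X − t·F(X) = y`, and let `H` be the antiderivative of `G` with `H(0) = 0`.  Then the
coefficient of `t^p·y^(d+1)` in `H(x(t;y))` is `binom(d+p,p)·R(d+p,p)/(d+1)`; i.e.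
`H(x(t;y)) − H(0)` is the l.g.f. `Σ_d GD̂(d,t)·y^(d+1)/(d+1)` of the o.g.f.s
`GD̂(d,t) = Σ_p binom(d+p,p)·R(d+p,p)·t^p` of the products of the diagonal entries of
Pascal's triangle with those of the Riordan triangle. -/
theorem riordan_diagonal_lgf (G F : ℚ⟦X⟧)
    (hG : constantCoeff (R := ℚ) G = 1) (hF0 : constantCoeff (R := ℚ) F = 0) (hF1 : coeff (R := ℚ) 1 F ≠ 0)
    (R : ℕ → ℕ → ℚ)
    (hR : ∀ n m : ℕ, R n m = coeff (R := ℚ) n (G * F ^ m))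
    (H : ℚ⟦X⟧) (hH0 : constantCoeff (R := ℚ) H = 0) (hH : H.derivativeFun = G)
    (Xser : (ℚ⟦X⟧)⟦X⟧)
    (hX0 : constantCoeff (R := ℚ⟦X⟧) Xser = 0)
    (hXeq : Xser - PowerSeries.C (R := ℚ⟦X⟧) PowerSeries.X *
        PowerSeries.substitute Xser (PowerSeries.map (PowerSeries.C (R := ℚ)) F)
      = PowerSeries.X) :
    ∀ d p : ℕ,
      coeff (R := ℚ) p (coeff (R := ℚ⟦X⟧) (d + 1)
          (PowerSeries.substitute Xser (PowerSeries.map (PowerSeries.C (R := ℚ)) H)))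
        = ((d + p).choose p : ℚ) * R (d + p) p / (d + 1) :=
  riordan_diagonal_lgf_general G F hF0 R hR H hH Xser hX0 hXeq
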